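/- Under the hypotheses of the main theorem, if M contains a function not vanishing at 0, then N = M ⊖ T_z(M) is one-dimensional. -/

import Mathlib

open scoped InnerProductSpace

noncomputable section

def coefn (f : PowerSeries ℂ) (n : ℕ) : ℂ := PowerSeries.coeff (R := ℂ) n f

def MemH2 (f : PowerSeries ℂ) : Prop := Summable (fun n => ‖coefn f n‖ ^ 2)

section Aux

open scoped ComplexInnerProductSpace

variable {E : Type*} [NormedAddCommGroup E] [InnerProductSpace ℂ E] [CompleteSpace E]

lemma aux_Tpow (J : E →ₗ[ℂ] PowerSeries ℂ) (T : E →L[ℂ] E)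
    (hT : ∀ x : E, J (T x) = PowerSeries.X * J x) (n : ℕ) (x : E) :
    J ((T ^ n) x) = PowerSeries.X ^ n * J x := by
  induction n generalizing x with
  | zero => simp
  | succ n ih =>
    rw [pow_succ, ContinuousLinearMap.mul_apply, ih, hT, pow_succ]
    ring

lemma aux_lowpow (T : E →L[ℂ] E) (δ : ℝ) (hδ : 0 < δ)
    (hlow : ∀ x : E, δ * ‖x‖ ≤ ‖T x‖) (n : ℕ) (x : E) :
    δ ^ n * ‖x‖ ≤ ‖(T ^ n) x‖ := by
  induction n generalizing x with
  | zero => simp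
  | succ n ih =>
    have e1 : (T ^ (n + 1)) x = (T ^ n) (T x) := by rw [pow_succ]; rfl
    rw [e1]
    calc δ ^ (n + 1) * ‖x‖ = δ ^ n * (δ * ‖x‖) := by ring
    _ ≤ δ ^ n * ‖T x‖ := by
        exact mul_le_mul_of_nonneg_left (hlow x) (by positivity)
    _ ≤ ‖(T ^ n) (T x)‖ := ih (T x)

lemma aux_uppow (T : E →L[ℂ] E) (hup : ∀ x : E, ‖T x‖ ≤ ‖x‖) (n : ℕ) (x : E) :
    ‖(T ^ n) x‖ ≤ ‖x‖ := by
  induction n generalizing x with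
  | zero => simp
  | succ n ih =>
    rw [pow_succ, ContinuousLinearMap.mul_apply]
    exact (ih (T x)).trans (hup x)

lemma aux_closed (T : E →L[ℂ] E) (δ : ℝ) (hδ : 0 < δ)
    (hlow : ∀ x : E, δ * ‖x‖ ≤ ‖T x‖) (k : ℕ) :
    IsClosed ((LinearMap.range ((T ^ k : E →L[ℂ] E) : E →ₗ[ℂ] E) : Submodule ℂ E) : Set E) := by
  have hpos : (0 : ℝ) < δ ^ k := by positivity
  have hanti : AntilipschitzWith ((δ ^ k)⁻¹).toNNReal (T ^ k) := by
    refine (T ^ k).antilipschitz_of_bound fun x => ?_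
    rw [Real.coe_toNNReal _ (by positivity)]
    calc ‖x‖ = (δ ^ k)⁻¹ * (δ ^ k * ‖x‖) := by field_simp
    _ ≤ (δ ^ k)⁻¹ * ‖(T ^ k) x‖ :=
        mul_le_mul_of_nonneg_left (aux_lowpow T δ hδ hlow k x) (by positivity)
  have := hanti.isClosed_range (T ^ k).uniformContinuous
  rwa [LinearMap.coe_range]

lemma aux_inner_pow (T : E →L[ℂ] E) (n : ℕ) (y u : E) :
    ⟪(T ^ n) y, u⟫_ℂ = ⟪y, ((ContinuousLinearMap.adjoint T) ^ n) u⟫_ℂ := by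
  induction n generalizing y u with
  | zero => simp
  | succ n ih =>
    have e1 : (T ^ (n + 1)) y = (T ^ n) (T y) := by rw [pow_succ]; rfl
    have e2 : ((ContinuousLinearMap.adjoint T) ^ (n + 1)) u
        = (ContinuousLinearMap.adjoint T) (((ContinuousLinearMap.adjoint T) ^ n) u) := by
      rw [pow_succ']; rfl
    rw [e1, e2, ContinuousLinearMap.adjoint_inner_right]
    exact ih (T y) u

lemma aux_ortho (T : E →L[ℂ] E)
    (hadj : ∀ n : ℕ, ∀ x : E,
      ((ContinuousLinearMap.adjoint T) ^ n) ((T ^ (n + 1)) x) ∈ LinearMap.range (T : E →ₗ[ℂ] E))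
    (y : E) (hy : y ∈ (LinearMap.range (T : E →ₗ[ℂ] E))ᗮ) (n d : ℕ) (x : E) :
    ⟪(T ^ n) y, (T ^ (n + 1 + d)) x⟫_ℂ = 0 := by
  have h1 : (T ^ (n + 1 + d)) x = (T ^ (n + 1)) ((T ^ d) x) := by
    rw [pow_add, ContinuousLinearMap.mul_apply]
  rw [h1, aux_inner_pow]
  have h2 := hadj n ((T ^ d) x)
  have h3 := (Submodule.mem_orthogonal _ y).mp hy _ h2
  rw [inner_eq_zero_symm] at h3
  exact h3

/-- Key lemma: if `g, h ∈ N` are orthogonal and `(Jg)(0) ≠ 0`, then `h = 0`. -/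
lemma aux_key (J : E →ₗ[ℂ] PowerSeries ℂ) (hJinj : Function.Injective J)
    (hH2 : ∀ x : E, MemH2 (J x))
    (T : E →L[ℂ] E) (hT : ∀ x : E, J (T x) = PowerSeries.X * J x)
    (δ : ℝ) (hδ : 0 < δ)
    (hlow : ∀ x : E, δ * ‖x‖ ≤ ‖T x‖)
    (hup : ∀ x : E, ‖T x‖ ≤ ‖x‖)
    (hadj : ∀ n : ℕ, ∀ x : E,
      ((ContinuousLinearMap.adjoint T) ^ n) ((T ^ (n + 1)) x) ∈ LinearMap.range (T : E →ₗ[ℂ] E))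
    (g h : E) (hg : g ∈ (LinearMap.range (T : E →ₗ[ℂ] E))ᗮ) (hh : h ∈ (LinearMap.range (T : E →ₗ[ℂ] E))ᗮ)
    (hgh : ⟪g, h⟫_ℂ = 0) (hg0 : coefn (J g) 0 ≠ 0) : h = 0 := by
  set N : Submodule ℂ E := (LinearMap.range (T : E →ₗ[ℂ] E))ᗮ with hNdef
  set gc : ℕ → ℂ := fun n => coefn (J g) n with hgc
  set hc : ℕ → ℂ := fun n => coefn (J h) n with hhc
  set w : ℕ → E := fun n => (-(hc n)) • g + (gc n) • h with hw
  have hwN : ∀ n, w n ∈ N := fun n => N.add_mem (N.smul_mem _ hg) (N.smul_mem _ hh)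
  set f : ℕ → E := fun n => (T ^ n) (w n) with hf
  -- pairwise orthogonality
  have hf_lt : ∀ i j : ℕ, i < j → ⟪f i, f j⟫_ℂ = 0 := by
    intro i j hij
    have hje : j = i + 1 + (j - i - 1) := by omega
    show ⟪(T ^ i) (w i), (T ^ j) (w j)⟫_ℂ = 0
    rw [hje]
    exact aux_ortho T hadj (w i) (hwN i) i (j - i - 1) _
  have hf_ne : ∀ i j : ℕ, i ≠ j → ⟪f i, f j⟫_ℂ = 0 := by
    intro i j hij
    rcases lt_or_gt_of_ne hij with hlt | hgt
    · exact hf_lt i j hlt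
    · exact inner_eq_zero_symm.mpr (hf_lt j i hgt)
  -- summability
  have hnormsq : Summable fun n => ‖f n‖ ^ 2 := by
    have hmaj : Summable fun n =>
        2 * (‖hc n‖ ^ 2 * ‖g‖ ^ 2) + 2 * (‖gc n‖ ^ 2 * ‖h‖ ^ 2) := by
      exact (((hH2 h).mul_right (‖g‖ ^ 2)).mul_left 2).add
        (((hH2 g).mul_right (‖h‖ ^ 2)).mul_left 2)
    refine Summable.of_nonneg_of_le (fun n => by positivity) (fun n => ?_) hmaj
    have h1 : ‖f n‖ ≤ ‖hc n‖ * ‖g‖ + ‖gc n‖ * ‖h‖ := by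
      calc ‖f n‖ ≤ ‖w n‖ := aux_uppow T hup n (w n)
      _ ≤ ‖(-(hc n)) • g‖ + ‖(gc n) • h‖ := norm_add_le _ _
      _ = ‖hc n‖ * ‖g‖ + ‖gc n‖ * ‖h‖ := by
          rw [norm_smul, norm_smul, norm_neg]
    have h2 : ‖f n‖ ^ 2 ≤ (‖hc n‖ * ‖g‖ + ‖gc n‖ * ‖h‖) ^ 2 := by
      have := norm_nonneg (f n)
      nlinarith
    nlinarith [sq_nonneg (‖hc n‖ * ‖g‖ - ‖gc n‖ * ‖h‖)]
  have hfam : OrthogonalFamily ℂ (fun n => ↥(Submodule.span ℂ {f n}))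
      (fun n => (Submodule.span ℂ {f n}).subtypeₗᵢ) := by
    intro i j hij v v'
    obtain ⟨c, hcv⟩ := Submodule.mem_span_singleton.mp v.2
    obtain ⟨d, hdv⟩ := Submodule.mem_span_singleton.mp v'.2
    show ⟪(v : E), (v' : E)⟫_ℂ = 0
    rw [← hcv, ← hdv, inner_smul_left, inner_smul_right, hf_ne i j hij]
    ring
  have hsummf : Summable f := by
    have := (hfam.summable_iff_norm_sq_summable
      (fun n => ⟨f n, Submodule.mem_span_singleton_self _⟩)).mpr (by exact hnormsq)
    exact this
  set x : E := ∑' n, f n with hx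
  -- tail membership
  have htail : ∀ k : ℕ,
      x - (∑ n ∈ Finset.range k, f n) ∈ LinearMap.range ((T ^ k : E →L[ℂ] E) : E →ₗ[ℂ] E) := by
    intro k
    have hs : Summable fun i => f (i + k) := (summable_nat_add_iff k).mpr hsummf
    have heq : x - ∑ n ∈ Finset.range k, f n = ∑' i, f (i + k) :=
      sub_eq_iff_eq_add'.mpr (hsummf.sum_add_tsum_nat_add k).symm
    rw [heq]
    refine (aux_closed T δ hδ hlow k).mem_of_tendsto hs.hasSum.tendsto_sum_nat
      (Filter.Eventually.of_forall fun m => ?_)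
    refine Submodule.sum_mem _ fun i _ => LinearMap.mem_range.mpr
      ⟨(T ^ i) (w (i + k)), ?_⟩
    rw [ContinuousLinearMap.coe_coe, ← ContinuousLinearMap.mul_apply, ← pow_add, add_comm k i]
  -- all coefficients of J x vanish
  have hJx : ∀ j : ℕ, (PowerSeries.coeff (R := ℂ) j) (J x) = 0 := by
    intro j
    obtain ⟨u, hu⟩ := LinearMap.mem_range.mp (htail (j + 1))
    have hxeq : x = (∑ n ∈ Finset.range (j + 1), f n) + (T ^ (j + 1)) u := by
      rw [ContinuousLinearMap.coe_coe] at hu; rw [hu]; abel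
    have hru : (PowerSeries.coeff (R := ℂ) j) (J ((T ^ (j + 1)) u)) = 0 := by
      rw [aux_Tpow J T hT, PowerSeries.coeff_X_pow_mul', if_neg (by omega)]
    have hterm : ∀ n ∈ Finset.range (j + 1),
        (PowerSeries.coeff (R := ℂ) j) (J (f n)) = -(hc n * gc (j - n)) + gc n * hc (j - n) := by
      intro n hn
      have hn' : n ≤ j := Nat.lt_succ_iff.mp (Finset.mem_range.mp hn)
      have : f n = (T ^ n) (w n) := rfl
      rw [this, aux_Tpow J T hT, PowerSeries.coeff_X_pow_mul', if_pos hn']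
      have : w n = (-(hc n)) • g + (gc n) • h := rfl
      rw [this, map_add, map_smul, map_smul, map_add, map_smul, map_smul]
      simp only [smul_eq_mul]
      have e1 : (PowerSeries.coeff (R := ℂ) (j - n)) (J g) = gc (j - n) := rfl
      have e2 : (PowerSeries.coeff (R := ℂ) (j - n)) (J h) = hc (j - n) := rfl
      rw [e1, e2]
      ring
    have hswap : ∑ n ∈ Finset.range (j + 1), gc n * hc (j - n)
        = ∑ n ∈ Finset.range (j + 1), hc n * gc (j - n) := by
      rw [← Finset.sum_range_reflect (fun n => hc n * gc (j - n)) (j + 1)]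
      refine Finset.sum_congr rfl fun i hi => ?_
      have hij : i ≤ j := Nat.lt_succ_iff.mp (Finset.mem_range.mp hi)
      have e1 : j + 1 - 1 - i = j - i := by omega
      rw [e1, Nat.sub_sub_self hij]
      ring
    calc (PowerSeries.coeff (R := ℂ) j) (J x)
        = (PowerSeries.coeff (R := ℂ) j) (J (∑ n ∈ Finset.range (j + 1), f n))
          + (PowerSeries.coeff (R := ℂ) j) (J ((T ^ (j + 1)) u)) := by
          rw [hxeq, map_add, map_add]
    _ = ∑ n ∈ Finset.range (j + 1), (PowerSeries.coeff (R := ℂ) j) (J (f n)) := by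
          rw [hru, add_zero, map_sum, map_sum]
    _ = ∑ n ∈ Finset.range (j + 1), (-(hc n * gc (j - n)) + gc n * hc (j - n)) :=
          Finset.sum_congr rfl hterm
    _ = 0 := by
          rw [Finset.sum_add_distrib, Finset.sum_neg_distrib, hswap]
          exact neg_add_cancel _
  have hx0 : x = 0 := by
    apply hJinj
    rw [map_zero]
    exact PowerSeries.ext fun j => by rw [hJx j, map_zero]
  -- deduce w 0 = 0
  have hw0 : w 0 = 0 := by
    have h1 := htail 1
    rw [hx0, Finset.sum_range_one, zero_sub, pow_one] at h1
    have h2 : f 0 ∈ LinearMap.range (T : E →ₗ[ℂ] E) := by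
      have := (LinearMap.range (T : E →ₗ[ℂ] E)).neg_mem h1
      rwa [neg_neg] at this
    have h3 : ⟪f 0, w 0⟫_ℂ = 0 :=
      (Submodule.mem_orthogonal _ (w 0)).mp (hwN 0) _ h2
    have h4 : f 0 = w 0 := by
      have : f 0 = (T ^ 0) (w 0) := rfl
      rw [this, pow_zero, ContinuousLinearMap.one_apply]
    rw [h4] at h3
    exact inner_self_eq_zero.mp h3
  -- conclude h = 0
  have h5 : (gc 0) • h = (hc 0) • g := by
    have h51 : (-(hc 0)) • g + (gc 0) • h = 0 := hw0
    have := eq_neg_of_add_eq_zero_right h51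
    rwa [neg_smul, neg_neg] at this
  have h6 : gc 0 * ⟪h, h⟫_ℂ = hc 0 * ⟪h, g⟫_ℂ := by
    rw [← inner_smul_right, ← inner_smul_right, h5]
  rw [inner_eq_zero_symm.mp hgh, mul_zero] at h6
  rcases mul_eq_zero.mp h6 with hbad | hgood
  · exact absurd hbad hg0
  · exact inner_self_eq_zero.mp hgood

end Aux

/-- Under the hypotheses of the main theorem, if `M` contains a function
not vanishing at `0`, then `N = M ⊖ T_z(M)` is one-dimensional. -/
theorem stmt7
    {E : Type*} [NormedAddCommGroup E] [InnerProductSpace ℂ E] [CompleteSpace E]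
    (J : E →ₗ[ℂ] PowerSeries ℂ) (hJinj : Function.Injective J)
    (hH2 : ∀ x : E, MemH2 (J x))
    (hnt : ∃ x : E, x ≠ 0)
    (T : E →L[ℂ] E) (hT : ∀ x : E, J (T x) = PowerSeries.X * J x)
    (δ : ℝ) (hδ : 0 < δ)
    (hlow : ∀ x : E, δ * ‖x‖ ≤ ‖T x‖)
    (hup : ∀ x : E, ‖T x‖ ≤ ‖x‖)
    (hadj : ∀ n : ℕ, ∀ x : E,
      ((ContinuousLinearMap.adjoint T) ^ n) ((T ^ (n + 1)) x) ∈ LinearMap.range (T : E →ₗ[ℂ] E))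
    (hnv : ∃ x : E, coefn (J x) 0 ≠ 0) :
    Module.finrank ℂ ((LinearMap.range (T : E →ₗ[ℂ] E))ᗮ : Submodule ℂ E) = 1 := by
  classical
  obtain ⟨x₀, hx₀⟩ := hnv
  have hcl : IsClosed ((LinearMap.range (T : E →ₗ[ℂ] E) : Submodule ℂ E) : Set E) := by
    have := aux_closed T δ hδ hlow 1
    rwa [pow_one] at this
  haveI : CompleteSpace (LinearMap.range (T : E →ₗ[ℂ] E)) := hcl.completeSpace_coe
  obtain ⟨y, hy, g, hgN, hxsum⟩ :=
    Submodule.exists_add_mem_mem_orthogonal (K := LinearMap.range (T : E →ₗ[ℂ] E)) x₀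
  have hrange0 : ∀ u ∈ LinearMap.range (T : E →ₗ[ℂ] E), coefn (J u) 0 = 0 := by
    intro u hu
    obtain ⟨v, hv⟩ := LinearMap.mem_range.mp hu
    rw [← hv]
    unfold coefn
    rw [ContinuousLinearMap.coe_coe, hT, PowerSeries.coeff_zero_eq_constantCoeff, map_mul,
      PowerSeries.constantCoeff_X, zero_mul]
  have hg0 : coefn (J g) 0 ≠ 0 := by
    intro h0
    apply hx₀
    rw [hxsum]
    unfold coefn at h0 ⊢
    rw [map_add, map_add]
    have := hrange0 y hy
    unfold coefn at this
    rw [this, h0, add_zero]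
  have hgne : g ≠ 0 := by
    intro h0
    apply hg0
    rw [h0, map_zero]
    simp [coefn]
  refine finrank_eq_one (⟨g, hgN⟩ : ((LinearMap.range (T : E →ₗ[ℂ] E))ᗮ : Submodule ℂ E)) ?_ ?_
  · intro hcontra
    exact hgne (congrArg Subtype.val hcontra)
  · rintro ⟨h, hhN⟩
    set c : ℂ := (inner ℂ g h : ℂ) / (inner ℂ g g : ℂ) with hc
    have hggne : (inner ℂ g g : ℂ) ≠ 0 := inner_self_ne_zero.mpr hgne
    have hh'N : h - c • g ∈ (LinearMap.range (T : E →ₗ[ℂ] E))ᗮ :=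
      Submodule.sub_mem _ hhN (Submodule.smul_mem _ _ hgN)
    have horth : (inner ℂ g (h - c • g) : ℂ) = 0 := by
      rw [inner_sub_right, inner_smul_right, hc, div_mul_cancel₀ _ hggne, sub_self]
    have hzero : h - c • g = 0 :=
      aux_key J hJinj hH2 T hT δ hδ hlow hup hadj g (h - c • g) hgN hh'N horth hg0
    refine ⟨c, ?_⟩
    apply Subtype.ext
    simp only [SetLike.mk_smul_mk]
    exact (sub_eq_zero.mp hzero).symm
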